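/- Let ω ∈ ℤ[X] be a polynomial of degree k ≥ 2. For every ε > 0 there exists a constant C (depending on ω and ε) such that for all positive integers N, all reals x, y, and all reals δ₁, δ₂, one has |W_ω(x + δ₁, y + δ₂; N) − W_ω(x, y; N)| ≤ C·(N^{2+ε}·|δ₁| + N^{k+1+ε}·|δ₂|). -/

import Mathlib

open MeasureTheory Finset Polynomial

/-- `e(t) = exp(2πit)`. -/
noncomputable def e (t : ℝ) : ℂ := Complex.exp (2 * Real.pi * Complex.I * t)

/-- The Weyl sum `S_ω(x, y; N) = ∑_{n=1}^{N} e(x·n + y·ω(n))`. -/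
noncomputable def WeylS (ω : Polynomial ℤ) (x y : ℝ) (N : ℕ) : ℂ :=
  ∑ n ∈ Finset.Icc 1 N, e (x * (n : ℝ) + y * ((ω.eval (n : ℤ) : ℤ) : ℝ))

/-- `η(k)` from the paper. -/
def etaP (k : ℕ) : ℕ :=
  if 2 * k + 2 ≥ (Nat.sqrt (2 * k + 2)) ^ 2 + Nat.sqrt (2 * k + 2) then 0 else 1

/-- `s₀(k)` from the paper. -/
def s0 (k : ℕ) : ℕ :=
  if k = 2 then 3 else if k = 3 then 5 else if k = 4 then 8 else if k = 5 then 12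
  else if k = 6 then 18 else if k = 7 then 24 else if k = 8 then 31 else if k = 9 then 40
  else if k = 10 then 49 else k * (k - 1) / 2 + Nat.sqrt (2 * k + 2) - etaP k

/-- The completed sum
`W_ω(x, y; N) = ∑_{h=−N}^{N} (1/(|h|+1))·|∑_{n=1}^{N} e(h·n/N + x·n + y·ω(n))|`. -/
noncomputable def WeylW (ω : Polynomial ℤ) (x y : ℝ) (N : ℕ) : ℝ :=
  ∑ h ∈ Finset.Icc (-(N : ℤ)) (N : ℤ), (1 / (|(h : ℝ)| + 1)) *
    ‖(∑ n ∈ Finset.Icc 1 N,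
      e ((h : ℝ) * (n : ℝ) / (N : ℝ) + x * (n : ℝ) + y * ((ω.eval (n : ℤ) : ℤ) : ℝ)))‖


/-!
Since `e` is `2π`-Lipschitz, every inner sum of `WeylW` moves by at most
`2π ∑_{n ≤ N} |δ₁ n + δ₂ ω(n)| ≪_ω |δ₁| N² + |δ₂| N^{k+1}`, uniformly in `h`.
Summing against the weights `1/(|h|+1)` costs a factor `2 H_{N+1} - 1 ≪ log N ≪_ε N^ε`.
-/

theorem e_eq_exp_I_mul (t : ℝ) : e t = Complex.exp (Complex.I * ↑(2 * Real.pi * t)) := by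
  rw [e]
  push_cast
  ring_nf

theorem norm_e_sub_e_le (a b : ℝ) : ‖e a - e b‖ ≤ 2 * Real.pi * |a - b| := by
  have hfactor : e a - e b = e b * (Complex.exp (Complex.I * ↑(2 * Real.pi * (a - b))) - 1) := by
    simp only [e_eq_exp_I_mul, mul_sub, mul_one, ← Complex.exp_add]
    push_cast
    ring_nf
  rw [hfactor, norm_mul, e_eq_exp_I_mul, Complex.norm_exp_I_mul_ofReal, one_mul]
  calc _ ≤ ‖2 * Real.pi * (a - b)‖ := Real.norm_exp_I_mul_ofReal_sub_one_le
    _ = 2 * Real.pi * |a - b| := by rw [Real.norm_eq_abs, abs_mul, abs_of_pos Real.two_pi_pos]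

theorem norm_sum_e_sub_sum_e_le {ι : Type*} (s : Finset ι) (f g : ι → ℝ) :
    ‖∑ i ∈ s, e (f i) - ∑ i ∈ s, e (g i)‖ ≤ 2 * Real.pi * ∑ i ∈ s, |f i - g i| := by
  rw [← sum_sub_distrib, mul_sum]
  exact (norm_sum_le _ _).trans (sum_le_sum fun i _ => norm_e_sub_e_le _ _)

def coeffAbsSum (ω : ℤ[X]) : ℝ := ∑ i ∈ range (ω.natDegree + 1), |(ω.coeff i : ℝ)|

theorem abs_eval_natCast_le (ω : ℤ[X]) {n N : ℕ} (hN : 1 ≤ N) (hn : n ≤ N) :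
    |((ω.eval (n : ℤ) : ℤ) : ℝ)| ≤ coeffAbsSum ω * (N : ℝ) ^ ω.natDegree := by
  rw [eval_eq_sum_range, coeffAbsSum, sum_mul]
  push_cast
  refine (abs_sum_le_sum_abs _ _).trans (sum_le_sum fun i hi => ?_)
  rw [abs_mul, abs_pow, Nat.abs_cast]
  gcongr
  calc (n : ℝ) ^ i ≤ (N : ℝ) ^ i := by gcongr
    _ ≤ (N : ℝ) ^ ω.natDegree :=
      pow_le_pow_right₀ (by exact_mod_cast hN) (mem_range_succ_iff.mp hi)

theorem sum_abs_linear_phase_le (ω : ℤ[X]) {N : ℕ} (hN : 1 ≤ N) (δ₁ δ₂ : ℝ) :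
    ∑ n ∈ Icc 1 N, |δ₁ * n + δ₂ * ((ω.eval (n : ℤ) : ℤ) : ℝ)|
      ≤ |δ₁| * (N : ℝ) ^ 2 + coeffAbsSum ω * |δ₂| * (N : ℝ) ^ (ω.natDegree + 1) := by
  have hterm : ∀ n ∈ Icc 1 N, |δ₁ * n + δ₂ * ((ω.eval (n : ℤ) : ℤ) : ℝ)|
      ≤ |δ₁| * N + |δ₂| * (coeffAbsSum ω * (N : ℝ) ^ ω.natDegree) := by
    intro n hn
    have hnN : n ≤ N := (mem_Icc.mp hn).2
    refine (abs_add_le _ _).trans ?_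
    rw [abs_mul, abs_mul, Nat.abs_cast]
    gcongr
    exact abs_eval_natCast_le ω hN hnN
  refine (sum_le_sum hterm).trans_eq ?_
  rw [sum_const, Nat.card_Icc, Nat.add_sub_cancel, nsmul_eq_mul]
  ring

theorem sum_Icc_neg_one_div_abs_add_one (N : ℕ) :
    ∑ h ∈ Icc (-(N : ℤ)) N, 1 / (|(h : ℝ)| + 1) + 1 = 2 * harmonic (N + 1) := by
  induction N with
  | zero => norm_num [harmonic_succ]
  | succ N ih =>
    have hIcc : Icc (-((N + 1 : ℕ) : ℤ)) ((N + 1 : ℕ) : ℤ)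
        = insert (-((N : ℤ) + 1)) (insert ((N : ℤ) + 1) (Icc (-(N : ℤ)) N)) := by
      ext h
      simp only [mem_Icc, mem_insert]
      omega
    rw [hIcc, sum_insert (by simp only [mem_insert, mem_Icc]; omega),
      sum_insert (by simp only [mem_Icc]; omega), harmonic_succ (N + 1)]
    push_cast at ih ⊢
    rw [abs_neg, abs_of_nonneg (by positivity)]
    linarith [one_div ((N : ℝ) + 1 + 1)]

theorem sum_Icc_neg_one_div_abs_add_one_le_rpow {ε : ℝ} (hε : 0 < ε) {N : ℕ} (hN : 1 ≤ N) :
    ∑ h ∈ Icc (-(N : ℤ)) N, 1 / (|(h : ℝ)| + 1) ≤ (2 + 2 / ε) * (N : ℝ) ^ ε := by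
  have hN' : (1 : ℝ) ≤ N := by exact_mod_cast hN
  have htail : 1 / ((N : ℝ) + 1) ≤ 1 / 2 := by gcongr; linarith
  have hharmonic : (harmonic (N + 1) : ℝ) = harmonic N + 1 / ((N : ℝ) + 1) := by
    rw [harmonic_succ]; push_cast; ring
  have hlog : Real.log N ≤ (N : ℝ) ^ ε / ε := Real.log_le_rpow_div (Nat.cast_nonneg N) hε
  have hpow : 1 ≤ (N : ℝ) ^ ε := Real.one_le_rpow hN' hε.le
  have hsplit : (2 + 2 / ε) * (N : ℝ) ^ ε = 2 * (N : ℝ) ^ ε + 2 * ((N : ℝ) ^ ε / ε) := by ring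
  linarith [sum_Icc_neg_one_div_abs_add_one N, harmonic_le_one_add_log N]

theorem abs_weylW_sub_weylW_le (ω : ℤ[X]) (x y x' y' : ℝ) (N : ℕ) :
    |WeylW ω x' y' N - WeylW ω x y N|
      ≤ (∑ h ∈ Icc (-(N : ℤ)) N, 1 / (|(h : ℝ)| + 1)) *
        (2 * Real.pi * ∑ n ∈ Icc 1 N, |(x' - x) * n + (y' - y) * ((ω.eval (n : ℤ) : ℤ) : ℝ)|) := by
  rw [WeylW, WeylW, ← sum_sub_distrib, sum_mul]
  refine (abs_sum_le_sum_abs _ _).trans (sum_le_sum fun h _ => ?_)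
  rw [← mul_sub, abs_mul, abs_of_pos (by positivity)]
  gcongr
  refine (abs_norm_sub_norm_le _ _).trans ((norm_sum_e_sub_sum_e_le _ _ _).trans_eq ?_)
  congr 2 with n
  ring_nf

theorem continuity_of_completed_sums_general
    (k : ℕ) (ω : Polynomial ℤ) (hω : ω.natDegree = k)
    (ε : ℝ) (hε : 0 < ε) :
    ∃ C : ℝ, ∀ N : ℕ, 0 < N → ∀ x y δ₁ δ₂ : ℝ,
      |WeylW ω (x + δ₁) (y + δ₂) N - WeylW ω x y N| ≤
        C * ((N : ℝ) ^ ((2 : ℝ) + ε) * |δ₁| + (N : ℝ) ^ ((k : ℝ) + 1 + ε) * |δ₂|) := by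
  set A := coeffAbsSum ω
  have hA : 0 ≤ A := sum_nonneg fun _ _ => abs_nonneg _
  refine ⟨(2 + 2 / ε) * (2 * Real.pi) * (1 + A), fun N hN x y δ₁ δ₂ => ?_⟩
  have hNpos : (0 : ℝ) < N := by exact_mod_cast hN
  have hphases := sum_abs_linear_phase_le ω hN δ₁ δ₂
  rw [hω] at hphases
  have hrpow₁ : (N : ℝ) ^ ((2 : ℝ) + ε) = (N : ℝ) ^ 2 * (N : ℝ) ^ ε := by
    rw [Real.rpow_add hNpos, ← Real.rpow_natCast]; norm_num
  have hrpow₂ : (N : ℝ) ^ ((k : ℝ) + 1 + ε) = (N : ℝ) ^ (k + 1) * (N : ℝ) ^ ε := by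
    rw [Real.rpow_add hNpos, ← Real.rpow_natCast]; push_cast; rfl
  have hslack : 0 ≤ (2 + 2 / ε) * (2 * Real.pi) * (N : ℝ) ^ ε *
      (A * (N : ℝ) ^ 2 * |δ₁| + (N : ℝ) ^ (k + 1) * |δ₂|) := by positivity
  calc |WeylW ω (x + δ₁) (y + δ₂) N - WeylW ω x y N|
      ≤ (∑ h ∈ Icc (-(N : ℤ)) N, 1 / (|(h : ℝ)| + 1)) *
        (2 * Real.pi * ∑ n ∈ Icc 1 N, |δ₁ * n + δ₂ * ((ω.eval (n : ℤ) : ℤ) : ℝ)|) := by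
        simpa using abs_weylW_sub_weylW_le ω x y (x + δ₁) (y + δ₂) N
    _ ≤ (2 + 2 / ε) * (N : ℝ) ^ ε *
        (2 * Real.pi * (|δ₁| * (N : ℝ) ^ 2 + A * |δ₂| * (N : ℝ) ^ (k + 1))) := by
        gcongr
        exact sum_Icc_neg_one_div_abs_add_one_le_rpow hε hN
    _ ≤ _ := by
        rw [hrpow₁, hrpow₂]
        linarith

theorem continuity_of_completed_sums
    (k : ℕ) (hk : 2 ≤ k) (ω : Polynomial ℤ) (hω : ω.natDegree = k)
    (ε : ℝ) (hε : 0 < ε) :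
    ∃ C : ℝ, ∀ N : ℕ, 0 < N → ∀ x y δ₁ δ₂ : ℝ,
      |WeylW ω (x + δ₁) (y + δ₂) N - WeylW ω x y N| ≤
        C * ((N : ℝ) ^ ((2 : ℝ) + ε) * |δ₁| + (N : ℝ) ^ ((k : ℝ) + 1 + ε) * |δ₂|) :=
  continuity_of_completed_sums_general k ω hω ε hε
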